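/- Let s>0, t>0, set D = B_{s,t}, and suppose a = (a₁,a₂) ∈ D and f_k = (u_k,v_k): Δ → D is a sequence of harmonic maps with f_k(0) → a and ‖df_k(0)‖ → ∞ as k → ∞. Then for every c ∈ ℝ: (i) there exists K ∈ ℕ such that c ∈ u_k(Δ) for all k ≥ K; and (ii) for every ε>0 there exists K ∈ ℕ such that for all k ≥ K there is a point z ∈ Δ with |z| < ε and u_k(z) = c. -/

import Mathlib

open Complex Metric Set Filter Topology

/-- The base domain `B_{s,t}`: `x₂ > x₁·log(t·x₁)` for `x₁ > 0`, `x₂ > 0` for `x₁ = 0`,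
and `x₂ > x₁·log(s·(-x₁))` for `x₁ < 0`. -/
def setB (s t : ℝ) : Set (ℝ × ℝ) :=
  {x | (0 < x.1 → x.1 * Real.log (t * x.1) < x.2) ∧ (x.1 = 0 → 0 < x.2) ∧
       (x.1 < 0 → x.1 * Real.log (s * (-x.1)) < x.2)}

/-- The Laplacian of `u : ℂ → ℝ`, as the sum of the second directional derivatives
in the directions `1` and `I`. -/
noncomputable def laplacian (u : ℂ → ℝ) (z : ℂ) : ℝ :=
  fderiv ℝ (fun w => fderiv ℝ u w 1) z 1 +
    fderiv ℝ (fun w => fderiv ℝ u w Complex.I) z Complex.I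

/-- A real-valued function is harmonic on a set if it is `C²` there and its
Laplacian vanishes there. -/
def HarmonicOn (u : ℂ → ℝ) (s : Set ℂ) : Prop :=
  ContDiffOn ℝ 2 u s ∧ ∀ z ∈ s, laplacian u z = 0

/-- A map `f = (u, v) : ℂ → ℝ²` is a harmonic map on a set if both components
are harmonic there. -/
def HarmonicMapOn (f : ℂ → ℝ × ℝ) (s : Set ℂ) : Prop :=
  HarmonicOn (fun z => (f z).1) s ∧ HarmonicOn (fun z => (f z).2) s

/-!
If `u_k` omitted the value `c` on a disc `|z| < ε`, it would stay on one side of `c` there, say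
`u_k < c`. Writing `u_k = Re F` with `F` holomorphic, `exp ∘ F` maps the disc into a disc of radius
`2 e^c` around `exp (F 0)`, so the Schwarz lemma bounds `|∇u_k(0)|` and keeps
`u_k ≥ u_k(0) - log 2` on a smaller disc whose size depends only on `c` and a bound for `f_k(0)`.
Over bounded `x₁` the domain `B_{s,t}` is bounded below in `x₂`, so on that smaller disc `v_k` is
bounded below and the same estimate bounds `|∇v_k(0)|`. Hence `‖df_k(0)‖` stays bounded,
contradicting the blow-up.
-/

lemma IsPreconnected.forall_lt_or_forall_gt_of_ne {α β : Type*} [TopologicalSpace α]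
    [LinearOrder β] [TopologicalSpace β] [OrderClosedTopology β] {s : Set α} {f : α → β} {c : β}
    (hs : IsPreconnected s) (hf : ContinuousOn f s) (hne : ∀ x ∈ s, f x ≠ c) :
    (∀ x ∈ s, f x < c) ∨ (∀ x ∈ s, c < f x) := by
  by_contra! h
  obtain ⟨⟨x, hx, hxc⟩, ⟨y, hy, hyc⟩⟩ := h
  obtain ⟨z, hz, hzc⟩ := hs.intermediate_value hy hx hf ⟨hyc, hxc⟩
  exact hne z hz hzc

lemma norm_fderiv_eq_max {𝕜 E F G : Type*} [NontriviallyNormedField 𝕜]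
    [NormedAddCommGroup E] [NormedSpace 𝕜 E] [NormedAddCommGroup F] [NormedSpace 𝕜 F]
    [NormedAddCommGroup G] [NormedSpace 𝕜 G]
    {f : E → F × G} {x : E} (hf₁ : DifferentiableAt 𝕜 (fun z => (f z).1) x)
    (hf₂ : DifferentiableAt 𝕜 (fun z => (f z).2) x) :
    ‖fderiv 𝕜 f x‖ = max ‖fderiv 𝕜 (fun z => (f z).1) x‖ ‖fderiv 𝕜 (fun z => (f z).2) x‖ := by
  change ‖fderiv 𝕜 (fun z => ((f z).1, (f z).2)) x‖ = _
  rw [hf₁.fderiv_prodMk hf₂, ContinuousLinearMap.opNorm_prod, Prod.norm_def]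

lemma norm_fderiv_re_le_norm_deriv {F : ℂ → ℂ} {u : ℂ → ℝ} {z : ℂ} (hF : DifferentiableAt ℂ F z)
    (hu : (fun w => (F w).re) =ᶠ[𝓝 z] u) : ‖fderiv ℝ u z‖ ≤ ‖deriv F z‖ := by
  have hFu : HasFDerivAt u (reCLM.comp ((fderiv ℂ F z).restrictScalars ℝ)) z :=
    (reCLM.hasFDerivAt.comp z (hF.hasFDerivAt.restrictScalars ℝ)).congr_of_eventuallyEq hu.symm
  rw [hFu.fderiv, norm_deriv_eq_norm_fderiv]
  calc _ ≤ ‖reCLM‖ * ‖(fderiv ℂ F z).restrictScalars ℝ‖ := ContinuousLinearMap.opNorm_comp_le _ _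
    _ = ‖fderiv ℂ F z‖ := by rw [reCLM_norm, one_mul, ContinuousLinearMap.norm_restrictScalars]

section ExpEstimates

variable {F : ℂ → ℂ} {c : ℂ} {r M : ℝ}

lemma mapsTo_cexp_closedBall_of_re_lt (hM : ∀ z ∈ ball c r, (F z).re < M) :
    MapsTo (fun z => Complex.exp (F z)) (ball c r)
      (closedBall (Complex.exp (F c)) (2 * Real.exp M)) := by
  intro z hz
  have hc : c ∈ ball c r := mem_ball_self (pos_of_mem_ball hz)
  rw [mem_closedBall, dist_eq_norm]
  calc ‖exp (F z) - exp (F c)‖ ≤ ‖exp (F z)‖ + ‖exp (F c)‖ := norm_sub_le _ _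
    _ ≤ Real.exp M + Real.exp M := by
      simp only [Complex.norm_exp]
      gcongr
      exacts [(hM z hz).le, (hM c hc).le]
    _ = 2 * Real.exp M := by ring

lemma norm_deriv_le_of_re_lt (hF : DifferentiableOn ℂ F (ball c r)) (hr : 0 < r)
    (hM : ∀ z ∈ ball c r, (F z).re < M) :
    ‖deriv F c‖ ≤ 2 * Real.exp (M - (F c).re) / r := by
  have hFc : HasDerivAt F (deriv F c) c :=
    (hF.differentiableAt (ball_mem_nhds c hr)).hasDerivAt
  have h :=
    Complex.norm_deriv_le_div_of_mapsTo_ball hF.cexp (mapsTo_cexp_closedBall_of_re_lt hM) hr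
  rw [hFc.cexp.deriv, norm_mul, Complex.norm_exp] at h
  have h' := (le_div_iff₀ hr).1 h
  rw [Real.exp_sub, le_div_iff₀ hr, mul_div_assoc', le_div_iff₀ (Real.exp_pos _)]
  linarith

lemma exp_re_sub_le_of_re_lt (hF : DifferentiableOn ℂ F (ball c r))
    (hM : ∀ z ∈ ball c r, (F z).re < M) {z : ℂ} (hz : z ∈ ball c r) :
    Real.exp (F c).re - 2 * Real.exp M / r * dist z c ≤ Real.exp (F z).re := by
  have h :=
    Complex.dist_le_div_mul_dist_of_mapsTo_ball hF.cexp (mapsTo_cexp_closedBall_of_re_lt hM) hz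
  have h' := abs_norm_sub_norm_le (Complex.exp (F z)) (Complex.exp (F c))
  rw [Complex.norm_exp, Complex.norm_exp, ← dist_eq_norm] at h'
  linarith [neg_abs_le (Real.exp (F z).re - Real.exp (F c).re)]

end ExpEstimates

lemma HarmonicOn.harmonicOnNhd {u : ℂ → ℝ} {s : Set ℂ} (hs : IsOpen s) (hu : HarmonicOn u s) :
    InnerProductSpace.HarmonicOnNhd u s := by
  intro x hx
  refine ⟨hu.1.contDiffAt (hs.mem_nhds hx), ?_⟩
  filter_upwards [hs.mem_nhds hx] with y hy
  have hd : DifferentiableAt ℝ (fderiv ℝ u) y :=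
    ((hu.1.contDiffAt (hs.mem_nhds hy)).fderiv_right (m := 1) (by norm_num)).differentiableAt
      (by norm_num)
  have := hu.2 y hy
  simp only [laplacian, fderiv_clm_apply hd (differentiableAt_const _), fderiv_fun_const] at this
  simpa [InnerProductSpace.laplacian_eq_iteratedFDeriv_complexPlane, iteratedFDeriv_two_apply]
    using this

section Harmonic

variable {u : ℂ → ℝ} {x : ℂ} {r M c : ℝ}

theorem InnerProductSpace.HarmonicOnNhd.norm_fderiv_le_of_lt (hu : HarmonicOnNhd u (ball x r))
    (hr : 0 < r) (hM : ∀ z ∈ ball x r, u z < M) :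
    ‖fderiv ℝ u x‖ ≤ 2 * Real.exp (M - u x) / r := by
  obtain ⟨F, hFa, hFu⟩ := hu.exists_analyticOnNhd_ball_re_eq
  replace hFu : ∀ z ∈ ball x r, (F z).re = u z := hFu
  have hx : x ∈ ball x r := mem_ball_self hr
  calc ‖fderiv ℝ u x‖ ≤ ‖deriv F x‖ :=
        norm_fderiv_re_le_norm_deriv (hFa x hx).differentiableAt
          (eventually_of_mem (ball_mem_nhds x hr) hFu)
    _ ≤ 2 * Real.exp (M - (F x).re) / r :=
        norm_deriv_le_of_re_lt hFa.differentiableOn hr fun z hz => hFu z hz ▸ hM z hz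
    _ = 2 * Real.exp (M - u x) / r := by rw [hFu x hx]

theorem InnerProductSpace.HarmonicOnNhd.sub_log_two_le_of_lt (hu : HarmonicOnNhd u (ball x r))
    (hr : 0 < r) (hM : ∀ z ∈ ball x r, u z < M) :
    ∀ z ∈ ball x (r * Real.exp (u x - M) / 4), u x - Real.log 2 ≤ u z := by
  obtain ⟨F, hFa, hFu⟩ := hu.exists_analyticOnNhd_ball_re_eq
  replace hFu : ∀ z ∈ ball x r, (F z).re = u z := hFu
  have hx : x ∈ ball x r := mem_ball_self hr
  have hexp : Real.exp (u x - M) < 1 := Real.exp_lt_one_iff.2 (by linarith [hM x hx])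
  intro z hz
  have hzr : z ∈ ball x r := ball_subset_ball (by nlinarith) hz
  have hF := exp_re_sub_le_of_re_lt hFa.differentiableOn (fun w hw => hFu w hw ▸ hM w hw) hzr
  rw [hFu x hx, hFu z hzr] at hF
  have hdist : 2 * Real.exp M / r * dist z x ≤ Real.exp (u x) / 2 :=
    calc 2 * Real.exp M / r * dist z x ≤ 2 * Real.exp M / r * (r * Real.exp (u x - M) / 4) := by
          gcongr; exact (mem_ball.1 hz).le
      _ = Real.exp (u x) / 2 := by rw [Real.exp_sub]; field_simp; ring
  have h2 : Real.exp (u x - Real.log 2) ≤ Real.exp (u z) := by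
    rw [Real.exp_sub, Real.exp_log two_pos]; linarith
  exact Real.exp_le_exp.1 h2

theorem InnerProductSpace.HarmonicOnNhd.norm_fderiv_le_of_ne (hu : HarmonicOnNhd u (ball x r))
    (hr : 0 < r) (hne : ∀ z ∈ ball x r, u z ≠ c) :
    ‖fderiv ℝ u x‖ ≤ 2 * Real.exp |u x - c| / r := by
  rcases (convex_ball x r).isPreconnected.forall_lt_or_forall_gt_of_ne hu.continuousOn hne
    with hlt | hgt
  · refine (hu.norm_fderiv_le_of_lt hr hlt).trans ?_
    gcongr
    exact (neg_sub (u x) c ▸ neg_le_abs _)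
  · have h := hu.neg.norm_fderiv_le_of_lt hr (M := -c) fun z hz => neg_lt_neg (hgt z hz)
    rw [fderiv_neg, norm_neg] at h
    refine h.trans ?_
    gcongr
    simp only [Pi.neg_apply, neg_sub_neg]
    exact le_abs_self _

theorem InnerProductSpace.HarmonicOnNhd.abs_le_of_ne (hu : HarmonicOnNhd u (ball x r))
    (hr : 0 < r) (hne : ∀ z ∈ ball x r, u z ≠ c) :
    ∀ z ∈ ball x (r * Real.exp (-|u x - c|) / 4), |u z| ≤ |u x| + |c| + 1 := by
  have hlog : Real.log 2 < 1 := Real.log_two_lt_d9.trans (by norm_num)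
  intro z hz
  have hzr : z ∈ ball x r :=
    ball_subset_ball
      (by nlinarith [Real.exp_le_one_iff.2 (neg_nonpos.2 (abs_nonneg (u x - c)))]) hz
  rcases (convex_ball x r).isPreconnected.forall_lt_or_forall_gt_of_ne hu.continuousOn hne
    with hlt | hgt
  · rw [abs_of_neg (sub_neg.2 (hlt x (mem_ball_self hr))), neg_neg] at hz
    have h := hu.sub_log_two_le_of_lt hr hlt z hz
    have := hlt z hzr
    rw [abs_le]
    constructor <;> linarith [neg_abs_le (u x), le_abs_self c, abs_nonneg (u x), abs_nonneg c]
  · rw [abs_of_pos (sub_pos.2 (hgt x (mem_ball_self hr)))] at hz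
    have h := hu.neg.sub_log_two_le_of_lt hr (M := -c) (fun z hz => neg_lt_neg (hgt z hz)) z
      (by simpa only [Pi.neg_apply, neg_sub_neg, neg_sub] using hz)
    have := hgt z hzr
    simp only [Pi.neg_apply] at h
    rw [abs_le]
    constructor <;> linarith [le_abs_self (u x), neg_abs_le c, abs_nonneg (u x), abs_nonneg c]

end Harmonic

lemma neg_inv_lt_mul_log_mul {t x : ℝ} (ht : 0 < t) (hx : 0 < x) :
    -(1 / t) < x * Real.log (t * x) := by
  have h := mul_le_mul_of_nonneg_left (Real.one_sub_inv_le_log_of_pos (mul_pos ht hx)) hx.le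
  have h' : x * (1 - (t * x)⁻¹) = x - 1 / t := by field_simp
  linarith

lemma mul_log_mul_lt_mul_sq {s y : ℝ} (hs : 0 < s) (hy : 0 < y) :
    y * Real.log (s * y) < s * y ^ 2 := by
  have h := mul_le_mul_of_nonneg_left (Real.log_le_sub_one_of_pos (mul_pos hs hy)) hy.le
  nlinarith

lemma snd_gt_of_mem_setB {s t A : ℝ} (hs : 0 < s) (ht : 0 < t) {x : ℝ × ℝ} (hx : x ∈ setB s t)
    (hA : |x.1| ≤ A) : -(1 / t + s * A ^ 2) < x.2 := by
  obtain ⟨hpos, hzero, hneg⟩ := hx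
  have h1t : 0 < 1 / t := by positivity
  rcases lt_trichotomy x.1 0 with h | h | h
  · have hy := mul_log_mul_lt_mul_sq hs (neg_pos.2 h)
    have hsq : (-x.1) ^ 2 ≤ A ^ 2 := by
      rw [neg_sq, ← sq_abs]
      exact pow_le_pow_left₀ (abs_nonneg _) hA 2
    nlinarith [hneg h]
  · nlinarith [hzero h, sq_nonneg A]
  · nlinarith [hpos h, neg_inv_lt_mul_log_mul ht h, sq_nonneg A]

theorem exists_norm_fderiv_le_of_fst_ne {s t : ℝ} (hs : 0 < s) (ht : 0 < t) (A c : ℝ) {ε : ℝ}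
    (hε : 0 < ε) (hε1 : ε ≤ 1) :
    ∃ C : ℝ, ∀ f : ℂ → ℝ × ℝ, HarmonicMapOn f (ball 0 1) → MapsTo f (ball 0 1) (setB s t) →
      ‖f 0‖ ≤ A → (∀ z ∈ ball (0 : ℂ) ε, (f z).1 ≠ c) → ‖fderiv ℝ f 0‖ ≤ C := by
  set B := |A| + |c| with hB
  set ρ := ε * Real.exp (-B) / 4 with hρ_def
  set m := -(1 / t + s * (B + 1) ^ 2) with hm
  have hρ : 0 < ρ := by positivity
  have hρε : ρ ≤ ε := by
    have : Real.exp (-B) ≤ 1 := Real.exp_le_one_iff.2 (neg_nonpos.2 (by positivity))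
    rw [hρ_def]; nlinarith
  clear_value B ρ m
  refine ⟨max (2 * Real.exp B / ε) (2 * Real.exp (A - m) / ρ), ?_⟩
  intro f hf hmaps hA hne
  set u := fun z => (f z).1
  set v := fun z => (f z).2
  have hu : InnerProductSpace.HarmonicOnNhd u (ball 0 ε) :=
    (hf.1.harmonicOnNhd isOpen_ball).mono (ball_subset_ball hε1)
  have hv : InnerProductSpace.HarmonicOnNhd v (ball 0 ρ) :=
    (hf.2.harmonicOnNhd isOpen_ball).mono (ball_subset_ball (hρε.trans hε1))
  have hu0 : |u 0| ≤ A := (norm_fst_le (f 0)).trans hA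
  have hv0 : |v 0| ≤ A := (norm_snd_le (f 0)).trans hA
  have hu0c : |u 0 - c| ≤ B :=
    (abs_sub _ _).trans (hB ▸ add_le_add_left (hu0.trans (le_abs_self A)) _)
  have hdu : ‖fderiv ℝ u 0‖ ≤ 2 * Real.exp B / ε := by
    have h := hu.norm_fderiv_le_of_ne hε hne
    refine h.trans ?_
    gcongr
  have hvm : ∀ z ∈ ball (0 : ℂ) ρ, m < v z := by
    intro z hz
    have hzε : z ∈ ball (0 : ℂ) (ε * Real.exp (-|u 0 - c|) / 4) :=
      ball_subset_ball (by rw [hρ_def]; gcongr) hz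
    have hzu : |(f z).1| ≤ |u 0| + |c| + 1 := hu.abs_le_of_ne hε hne z hzε
    rw [hm]
    exact snd_gt_of_mem_setB hs ht (hmaps (ball_subset_ball (hρε.trans hε1) hz))
      (by linarith [hu0.trans (le_abs_self A)])
  have hdv : ‖fderiv ℝ v 0‖ ≤ 2 * Real.exp (A - m) / ρ := by
    have h := hv.neg.norm_fderiv_le_of_lt hρ (M := -m) fun z hz => neg_lt_neg (hvm z hz)
    rw [fderiv_neg, norm_neg, Pi.neg_apply, neg_sub_neg] at h
    exact h.trans (by gcongr; linarith [le_abs_self (v 0)])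
  rw [norm_fderiv_eq_max ((hu 0 (mem_ball_self hε)).1.differentiableAt two_ne_zero)
    ((hv 0 (mem_ball_self hρ)).1.differentiableAt two_ne_zero)]
  exact max_le_max hdu hdv

theorem levelSets_B_general (s t : ℝ) (hs : 0 < s) (ht : 0 < t)
    (a : ℝ × ℝ) (f : ℕ → ℂ → ℝ × ℝ)
    (hharm : ∀ k, HarmonicMapOn (f k) (ball (0 : ℂ) 1))
    (hmaps : ∀ k, MapsTo (f k) (ball (0 : ℂ) 1) (setB s t))
    (hconv : Tendsto (fun k => f k 0) atTop (𝓝 a))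
    (hblow : Tendsto (fun k => ‖fderiv ℝ (f k) 0‖) atTop atTop) :
    ∀ c : ℝ,
      (∃ K : ℕ, ∀ k ≥ K, ∃ z ∈ ball (0 : ℂ) 1, (f k z).1 = c) ∧
      (∀ ε > (0 : ℝ), ∃ K : ℕ, ∀ k ≥ K,
        ∃ z ∈ ball (0 : ℂ) 1, ‖z‖ < ε ∧ (f k z).1 = c) := by
  intro c
  obtain ⟨A, hA⟩ := isBounded_iff_forall_norm_le.1 (isBounded_range_of_tendsto _ hconv)
  have hnear : ∀ ε > (0 : ℝ), ∃ K : ℕ, ∀ k ≥ K,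
      ∃ z ∈ ball (0 : ℂ) 1, ‖z‖ < ε ∧ (f k z).1 = c := by
    intro ε hε
    obtain ⟨C, hC⟩ :=
      exists_norm_fderiv_le_of_fst_ne hs ht A c (lt_min hε one_pos) (min_le_right ε 1)
    obtain ⟨K, hK⟩ := eventually_atTop.1 (hblow.eventually_gt_atTop C)
    refine ⟨K, fun k hk => ?_⟩
    by_contra! hfar
    refine (hK k hk).not_ge (hC (f k) (hharm k) (hmaps k) (hA _ ⟨k, rfl⟩) fun z hz => ?_)
    have hz' : ‖z‖ < min ε 1 := mem_ball_zero_iff.1 hz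
    exact hfar z (mem_ball_zero_iff.2 (hz'.trans_le (min_le_right _ _)))
      (hz'.trans_le (min_le_left _ _))
  obtain ⟨K, hK⟩ := hnear 1 one_pos
  exact ⟨⟨K, fun k hk => (hK k hk).imp fun z ⟨hz, _, hzc⟩ => ⟨hz, hzc⟩⟩, hnear⟩

/-- Level-set properties (Proposition 2.1 of the paper) for a degenerating sequence of
harmonic maps into `B_{s,t}`: (i) every value `c` is attained by the first component
`u_k` for all large `k`; (ii) the level set `{u_k = c}` approaches the origin. -/
theorem levelSets_B (s t : ℝ) (hs : 0 < s) (ht : 0 < t)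
    (a : ℝ × ℝ) (ha : a ∈ setB s t) (f : ℕ → ℂ → ℝ × ℝ)
    (hharm : ∀ k, HarmonicMapOn (f k) (ball (0 : ℂ) 1))
    (hmaps : ∀ k, MapsTo (f k) (ball (0 : ℂ) 1) (setB s t))
    (hconv : Tendsto (fun k => f k 0) atTop (𝓝 a))
    (hblow : Tendsto (fun k => ‖fderiv ℝ (f k) 0‖) atTop atTop) :
    ∀ c : ℝ,
      (∃ K : ℕ, ∀ k ≥ K, ∃ z ∈ ball (0 : ℂ) 1, (f k z).1 = c) ∧
      (∀ ε > (0 : ℝ), ∃ K : ℕ, ∀ k ≥ K,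
        ∃ z ∈ ball (0 : ℂ) 1, ‖z‖ < ε ∧ (f k z).1 = c) :=
  levelSets_B_general s t hs ht a f hharm hmaps hconv hblow
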